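/- Let k ≥ 2, let w ∈ {right, down}^{k−1} be the step word of a stair with k boxes and let v : {0,…,k−1} → ℤ be its favorite condition. Let S = {a, a+1, …, b} be a proper nonempty interval of boxes which is a submodule substair. Then Σ_{i∈S} v(i) equals the number of internal endpoints of S: it equals 1 if exactly one of the conditions a > 0 and b < k−1 holds, and 2 if both hold. (This is the Remark computing θ_𝓕(𝓔_Γ) ∈ {1, 2} for a connected G-equivariant ℂ[x,y]-submodule of a toric G-constellation, according to whether its substair has one or two internal endpoints.) -/

import Mathlib

/-- A step of a stair: a right step `+(1,0)` or a down step `+(0,-1)`. -/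
inductive Step
  | right
  | down
deriving DecidableEq, BEq

/-- Box `i` of a stair with `k` boxes and step word `w` is a generator. -/
def IsGenBox (k : ℕ) (w : ℕ → Step) (i : ℕ) : Prop :=
  (i = 0 ∨ w (i - 1) = Step.down) ∧ (i = k - 1 ∨ w i = Step.right)

/-- Box `i` of a stair with `k` boxes and step word `w` is an antigenerator. -/
def IsAntigenBox (k : ℕ) (w : ℕ → Step) (i : ℕ) : Prop :=
  (i = 0 ∨ w (i - 1) = Step.right) ∧ (i = k - 1 ∨ w i = Step.down)

instance (k : ℕ) (w : ℕ → Step) : DecidablePred (IsGenBox k w) := fun i => by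
  unfold IsGenBox; infer_instance

instance (k : ℕ) (w : ℕ → Step) : DecidablePred (IsAntigenBox k w) := fun i => by
  unfold IsAntigenBox; infer_instance

/-- The favorite condition of the stair with `k` boxes and step word `w`. -/
def fav (k : ℕ) (w : ℕ → Step) (i : ℕ) : ℤ :=
  if IsGenBox k w i then (if i = 0 ∨ i = k - 1 then -1 else -2)
  else if IsAntigenBox k w i then (if i = 0 ∨ i = k - 1 then 1 else 2)
  else 0

/-- A subset `S` of the boxes `{0, …, k-1}` is a submodule substair. -/
def IsSubmoduleSubstair (k : ℕ) (w : ℕ → Step) (S : Finset ℕ) : Prop :=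
  S ⊆ Finset.range k ∧
  ∀ i : ℕ, i < k - 1 →
    (i ∈ S → w i = Step.right → i + 1 ∈ S) ∧
    (i + 1 ∈ S → w i = Step.down → i ∈ S)

/-!
The favorite condition is a discrete derivative: giving a down step the sign `+1` and a right
step the sign `-1`, the value at a box is the sign of the step leaving it minus the sign of the
step entering it (a missing step counting `0`). Hence its sum over an interval of boxes
telescopes to the sign of the step leaving the interval minus that of the step entering it. For
a submodule substair the step entering from the left must be a right step and the step leaving
to the right a down step, so each internal endpoint contributes `1`.
-/

def Step.sign : Step → ℤ
  | Step.right => -1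
  | Step.down => 1

def entrySign (k : ℕ) (w : ℕ → Step) (j : ℕ) : ℤ :=
  if j = 0 ∨ k ≤ j then 0 else (w (j - 1)).sign

section entrySign

variable {k : ℕ} {w : ℕ → Step} {j : ℕ}

theorem entrySign_zero : entrySign k w 0 = 0 := by
  simp [entrySign]

theorem entrySign_of_le (hj : k ≤ j) : entrySign k w j = 0 := by
  simp [entrySign, hj]

theorem entrySign_of_pos_of_lt (h0 : 0 < j) (hj : j < k) :
    entrySign k w j = (w (j - 1)).sign := by
  simp [entrySign, h0.ne', not_le.2 hj]

end entrySign

theorem fav_eq_entrySign_sub {k : ℕ} (hk : 2 ≤ k) (w : ℕ → Step) {i : ℕ} (hi : i < k) :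
    fav k w i = entrySign k w (i + 1) - entrySign k w i := by
  have hk1 : k - 1 ≠ 0 := by omega
  obtain rfl | h0 := eq_or_ne i 0
  · rw [zero_add, entrySign_zero, entrySign_of_pos_of_lt one_pos (by omega)]
    rcases hv : w 0 with _ | _ <;> simp [fav, IsGenBox, IsAntigenBox, Step.sign, hv, hk1.symm]
  obtain rfl | h1 := eq_or_ne i (k - 1)
  · rw [entrySign_of_le (by omega), entrySign_of_pos_of_lt (by omega) hi]
    rcases hu : w (k - 1 - 1) with _ | _ <;> simp [fav, IsGenBox, IsAntigenBox, Step.sign, hu, hk1]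
  rw [entrySign_of_pos_of_lt (by omega) (by omega), entrySign_of_pos_of_lt (by omega) hi,
    Nat.add_sub_cancel]
  rcases hu : w (i - 1) with _ | _ <;> rcases hv : w i with _ | _ <;>
    simp [fav, IsGenBox, IsAntigenBox, Step.sign, hu, hv, h0, h1]

theorem sum_fav_Icc {k : ℕ} (hk : 2 ≤ k) (w : ℕ → Step) {a b : ℕ} (hab : a ≤ b) (hb : b < k) :
    ∑ i ∈ Finset.Icc a b, fav k w i = entrySign k w (b + 1) - entrySign k w a := by
  rw [← Finset.sum_Icc_sub hab]
  exact Finset.sum_congr rfl fun i hi ↦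
    fav_eq_entrySign_sub hk w ((Finset.mem_Icc.1 hi).2.trans_lt hb)

namespace IsSubmoduleSubstair

variable {k : ℕ} {w : ℕ → Step} {S : Finset ℕ} {i : ℕ}

theorem step_eq_right_of_notMem_of_succ_mem (hS : IsSubmoduleSubstair k w S) (hi : i < k - 1)
    (hiS : i ∉ S) (hsucc : i + 1 ∈ S) : w i = Step.right := by
  cases hw : w i
  · rfl
  · exact absurd ((hS.2 i hi).2 hsucc hw) hiS

theorem step_eq_down_of_mem_of_succ_notMem (hS : IsSubmoduleSubstair k w S) (hi : i < k - 1)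
    (hiS : i ∈ S) (hsucc : i + 1 ∉ S) : w i = Step.down := by
  cases hw : w i
  · exact absurd ((hS.2 i hi).1 hiS hw) hsucc
  · rfl

theorem lt_of_mem (hS : IsSubmoduleSubstair k w S) (hiS : i ∈ S) : i < k :=
  Finset.mem_range.1 (hS.1 hiS)

end IsSubmoduleSubstair

theorem stmt12_general (k : ℕ) (hk : 2 ≤ k) (w : ℕ → Step) (a b : ℕ)
    (hab : a ≤ b)
    (hsub : IsSubmoduleSubstair k w (Finset.Icc a b)) :
    ∑ i ∈ Finset.Icc a b, fav k w i =
      (if 0 < a then 1 else 0) + (if b < k - 1 then 1 else 0) := by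
  have hbk : b < k := hsub.lt_of_mem (Finset.right_mem_Icc.2 hab)
  have hleft : entrySign k w a = if 0 < a then -1 else 0 := by
    split_ifs with ha
    · have hstep : w (a - 1) = Step.right :=
        hsub.step_eq_right_of_notMem_of_succ_mem (by omega) (by simp; omega) (by simp; omega)
      rw [entrySign_of_pos_of_lt ha (by omega), hstep, Step.sign]
    · rw [Nat.eq_zero_of_not_pos ha, entrySign_zero]
  have hright : entrySign k w (b + 1) = if b < k - 1 then 1 else 0 := by
    split_ifs with hb
    · have hstep : w b = Step.down :=
        hsub.step_eq_down_of_mem_of_succ_notMem hb (by simp; omega) (by simp)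
      rw [entrySign_of_pos_of_lt (by omega) (by omega), Nat.add_sub_cancel, hstep, Step.sign]
    · exact entrySign_of_le (by omega)
  rw [sum_fav_Icc hk w hab hbk, hleft, hright]
  split_ifs <;> norm_num

/-- Let `S = {a, …, b}` be a proper nonempty interval of boxes of a stair
with `k ≥ 2` boxes which is a submodule substair.  Then the favorite condition sums over `S`
to the number of internal endpoints of `S`: `1` if exactly one of `a > 0` and `b < k-1` holds
and `2` if both hold. -/
theorem stmt12 (k : ℕ) (hk : 2 ≤ k) (w : ℕ → Step) (a b : ℕ)
    (hab : a ≤ b) (hbk : b ≤ k - 1)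
    (hsub : IsSubmoduleSubstair k w (Finset.Icc a b))
    (hproper : ¬(a = 0 ∧ b = k - 1)) :
    ∑ i ∈ Finset.Icc a b, fav k w i =
      (if 0 < a then 1 else 0) + (if b < k - 1 then 1 else 0) :=
  stmt12_general k hk w a b hab hsub
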